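/- Fix g ≥ 1, N := 2g+1, distinct indices k ≠ n in {1,…,N}, complex constants u_m (m ≠ k), a point t₀ ∈ ℂ, a constant Ω_∞ ∈ ℂ, and functions q₁,…,q_g, w₁,…,w_g, Ω_n, Ω_k, f_n, f_k : ℂ → ℂ of a single complex variable t (representing the moving branch point u_k). Write u_k := t₀ and assume: u₁,…,u_N are pairwise distinct; q₁(t₀),…,q_g(t₀) are pairwise distinct and distinct from all u_m; w_j(t₀) ≠ 0 for all j; f_n(t₀) ≠ 0 and f_k(t₀) ≠ 0. Assume the following derivative hypotheses at t₀ (all values taken at t₀): q_j′ = −(1/4)·Ω_k·f_k·∏_{α≠j}(u_k − q_α)/(w_j·∏_{α≠j}(q_j − q_α)) for every j; Ω_n′ = (1/2)·(Ω_k/(u_k − u_n))·(f_k/f_n)·∏_{α=1}^g(u_k − q_α)/∏_{α=1}^g(u_n − q_α); and f_n′ = (1/2)·f_n/(u_n − u_k). Define A12_n := (1/4)·Ω_n·f_n·∏_{α=1}^g(u_n − q_α), A12_k := (1/4)·Ω_k·f_k·∏_{α=1}^g(u_k − q_α), β_n := A12_n·(Σ_{j=1}^g 1/(w_j·(u_n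 − q_j)·∏_{β≠j}(q_j − q_β)) − Ω_∞/2), and β_k := A12_k·(Σ_{j=1}^g 1/(w_j·(u_k − q_j)·∏_{β≠j}(q_j − q_β)) − Ω_∞/2). Then the function t ↦ (1/4)·Ω_n(t)·f_n(t)·∏_{α=1}^g(u_n − q_α(t)) has complex derivative at t₀ equal to (A12_k·(β_n + 1/2) − A12_n·(β_k + 1/2))/(u_k − u_n). -/

import Mathlib

/-!
Write `A_n = ¼ Ω_n f_n P_n` with `P_n = ∏_α (u_n − q_α)`, and differentiate by the product rule.
The variations of `Ω_n` and `f_n` contribute `(A_k − A_n)/(2(u_k − u_n))`. In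
`A_k β_n − A_n β_k = A_k A_n Σ_j (1/(u_n − q_j) − 1/(u_k − q_j))/(w_j ∏_{β≠j}(q_j − q_β))` the
`Ω_∞` terms cancel, and the partial fraction
`1/(u_n − q_j) − 1/(u_k − q_j) = (u_k − u_n)/((u_n − q_j)(u_k − q_j))` cancels the factors
`u_n − q_j`, `u_k − q_j` of `A_n`, `A_k`: what remains of the `j`-th summand is the contribution of
`q_j'` to the derivative of `P_n`.
-/

open Finset

theorem HasDerivAt.finsetProd_const_sub {𝕜 ι : Type*} [NontriviallyNormedField 𝕜]
    [DecidableEq ι] {s : Finset ι} {q : ι → 𝕜 → 𝕜} {q' : ι → 𝕜} {c x : 𝕜}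
    (hq : ∀ j ∈ s, HasDerivAt (q j) (q' j) x) :
    HasDerivAt (fun t => ∏ α ∈ s, (c - q α t))
      (-∑ j ∈ s, (∏ α ∈ s.erase j, (c - q α x)) * q' j) x := by
  simpa [smul_eq_mul] using
    HasDerivAt.fun_finsetProd fun j hj => (hasDerivAt_const x c).sub (hq j hj)

section Algebra

variable {K : Type*} [Field K]

theorem residue_combination_eq (a b x y o s : K) :
    (a * (b * (x - o) + 1 / 2) - b * (a * (y - o) + 1 / 2)) / s
      = a * b * (x - y) / s + (a - b) / 2 / s := by
  ring

theorem variation_prefactor_eq {b P : K} (hb : b ≠ 0) (hP : P ≠ 0) (a c d P' s t : K) :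
    (1 / 4 * (1 / 2 * (c / (s - t)) * (d / b) * P' / P) * b +
        1 / 4 * a * (1 / 2 * b / (t - s))) * P
      = (1 / 4 * c * d * P' - 1 / 4 * a * b * P) / 2 / (s - t) := by
  rw [show t - s = -(s - t) by ring]
  field_simp
  ring

theorem partial_fraction_cancel {a b q : K} (ha : q ≠ a) (hb : q ≠ b) (hab : a ≠ b)
    (c d W D Y Z : K) :
    c * ((a - q) * Y) * (d * ((b - q) * Z)) *
        (1 / (W * (b - q) * D) - 1 / (W * (a - q) * D)) / (a - b)
      = c * Y * (d * Z) / (W * D) := by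
  have ha' : a - q ≠ 0 := sub_ne_zero.mpr ha.symm
  have hb' : b - q ≠ 0 := sub_ne_zero.mpr hb.symm
  have hab' : a - b ≠ 0 := sub_ne_zero.mpr hab
  rw [show ∀ x, 1 / (W * x * D) = 1 / (W * D) / x from fun x => by ring]
  field_simp
  ring

end Algebra

theorem A12_derivative {g N : ℕ}
    (k n : Fin N) (hkn : k ≠ n) (u : Fin N → ℂ)
    (q w : Fin g → ℂ → ℂ) (Ωn Ωk fn fk : ℂ → ℂ) (Ωinf : ℂ)
    (hu : ∀ m m' : Fin N, m ≠ m' → u m ≠ u m')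
    (hqu : ∀ (j : Fin g) (m : Fin N), q j (u k) ≠ u m)
    (hfn : fn (u k) ≠ 0)
    (hdq : ∀ j : Fin g, HasDerivAt (q j)
      (-(1 / 4) * Ωk (u k) * fk (u k) *
        (∏ α ∈ univ.erase j, (u k - q α (u k))) /
        (w j (u k) * ∏ α ∈ univ.erase j, (q j (u k) - q α (u k)))) (u k))
    (hdΩ : HasDerivAt Ωn
      ((1 / 2) * (Ωk (u k) / (u k - u n)) * (fk (u k) / fn (u k)) *
        (∏ α, (u k - q α (u k))) / ∏ α, (u n - q α (u k))) (u k))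
    (hdf : HasDerivAt fn ((1 / 2) * fn (u k) / (u n - u k)) (u k)) :
    HasDerivAt (fun t => (1 / 4) * Ωn t * fn t * ∏ α, (u n - q α t))
      ((((1 / 4) * Ωk (u k) * fk (u k) * ∏ α, (u k - q α (u k))) *
          (((1 / 4) * Ωn (u k) * fn (u k) * ∏ α, (u n - q α (u k))) *
            ((∑ j, 1 / (w j (u k) * (u n - q j (u k)) *
              ∏ β ∈ univ.erase j, (q j (u k) - q β (u k)))) - Ωinf / 2) + 1 / 2) -
        ((1 / 4) * Ωn (u k) * fn (u k) * ∏ α, (u n - q α (u k))) *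
          (((1 / 4) * Ωk (u k) * fk (u k) * ∏ α, (u k - q α (u k))) *
            ((∑ j, 1 / (w j (u k) * (u k - q j (u k)) *
              ∏ β ∈ univ.erase j, (q j (u k) - q β (u k)))) - Ωinf / 2) + 1 / 2)) /
        (u k - u n)) (u k) := by
  have hPn : ∏ α, (u n - q α (u k)) ≠ 0 :=
    prod_ne_zero_iff.mpr fun j _ => sub_ne_zero.mpr (hqu j n).symm
  refine (((hdΩ.const_mul (1 / 4)).fun_mul hdf).fun_mul
    (HasDerivAt.finsetProd_const_sub fun j _ => hdq j)).congr_deriv ?_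
  rw [residue_combination_eq, add_comm, variation_prefactor_eq hfn hPn]
  congr 1
  rw [← sum_sub_distrib, mul_sum, sum_div, mul_neg, mul_sum, ← sum_neg_distrib]
  refine sum_congr rfl fun j _ => ?_
  rw [← mul_prod_erase univ (fun α => u n - q α (u k)) (mem_univ j),
    ← mul_prod_erase univ (fun α => u k - q α (u k)) (mem_univ j),
    partial_fraction_cancel (hqu j k) (hqu j n) (hu k n hkn)]
  ring
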